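/- arXiv:1003.3844 — 5 statements merged into one kernel-verified Lean document; each statement's English description precedes it below -/
import Mathlib

section
/- For any N ≥ 2 and any y ∈ {0,1}^N, define a deterministic strategy where party i outputs a_i = y_{i+1} if its input is x_i = y_i, and a_i = ȳ_{i+1} if x_i = ȳ_i. Then this strategy wins the GYNI game (i.e., a_i = x_{i+1} for all i) exactly when the global input string x equals y or ȳ, and loses for every other input string x. -/
open scoped BigOperators

/-- Bitwise negation of a bit string. -/
def negStr {N : ℕ} (x : Fin N → Bool) : Fin N → Bool := fun i => !(x i)

/-- A no-signalling box for `N` parties with binary inputs and outputs. -/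
structure NSBox (N : ℕ) where
  P : (Fin N → Bool) → (Fin N → Bool) → ℝ
  nonneg : ∀ a x, 0 ≤ P a x
  normalized : ∀ x, ∑ a, P a x = 1
  noSignalling : ∀ (S : Finset (Fin N)) (x x' : Fin N → Bool),
    (∀ i ∈ S, x i = x' i) → ∀ a : Fin N → Bool,
      ∑ a' ∈ Finset.univ.filter (fun a' => ∀ i ∈ S, a' i = a i), P a' x =
      ∑ a' ∈ Finset.univ.filter (fun a' => ∀ i ∈ S, a' i = a i), P a' x'

/-- GYNI winning probability of a no-signalling box for prior `q`. -/
noncomputable def gyniWin {N : ℕ} [NeZero N] (q : (Fin N → Bool) → ℝ) (B : NSBox N) : ℝ :=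
  ∑ x, q x * B.P (fun i => x (i + 1)) x

/-- The classical GYNI bound `ω_c = max_x (q(x) + q(x̄))`. -/
noncomputable def omegaC {N : ℕ} (q : (Fin N → Bool) → ℝ) : ℝ :=
  Finset.univ.sup' Finset.univ_nonempty (fun x => q x + q (negStr x))

/-- A deterministic local strategy wins the GYNI game on input string `x`. -/
def winsOn {N : ℕ} [NeZero N] (f : Fin N → Bool → Bool) (x : Fin N → Bool) : Bool :=
  decide (∀ i, f i (x i) = x (i + 1))

/-- Winning probability of a deterministic local strategy. -/
noncomputable def classWin {N : ℕ} [NeZero N] (q : (Fin N → Bool) → ℝ)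
    (f : Fin N → Bool → Bool) : ℝ :=
  ∑ x, q x * (if winsOn f x then (1:ℝ) else 0)

/-! The defect `d i = x i ⊕ y i` records whether party `i`'s input was flipped relative to `y`.
Party `i` wins exactly when the defect does not change from `i` to `i + 1`, so the whole ring
wins iff the defect is constant around the cycle, i.e. iff `x` is `y` (defect `false`) or `ȳ`
(defect `true`). -/

theorem Bool.xor_xor_eq_iff_xor_eq (a b c d : Bool) :
    xor b (xor a c) = d ↔ xor d b = xor a c := by
  cases a <;> cases b <;> cases c <;> cases d <;> decide

theorem Fin.forall_apply_add_one_eq_iff_exists_const {N : ℕ} [NeZero N] {α : Type*}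
    (f : Fin N → α) : (∀ i, f (i + 1) = f i) ↔ ∃ b, ∀ i, f i = b := by
  refine ⟨fun h => ⟨f 0, ?_⟩, fun ⟨b, hb⟩ i => by rw [hb, hb]⟩
  obtain ⟨n, rfl⟩ := Nat.exists_eq_succ_of_ne_zero (NeZero.ne N)
  intro i
  induction i using Fin.induction with
  | zero => rfl
  | succ i ih => rw [← Fin.coeSucc_eq_succ, h, ih]

theorem eq_or_eq_negStr_iff_exists_xor_const {N : ℕ} (x y : Fin N → Bool) :
    (x = y ∨ x = negStr y) ↔ ∃ b, ∀ i, xor (x i) (y i) = b := by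
  constructor
  · rintro (rfl | rfl)
    · exact ⟨false, by simp⟩
    · exact ⟨true, by simp [negStr]⟩
  · rintro ⟨b | b, hb⟩
    · exact .inl (funext fun i => by simpa using hb i)
    · exact .inr (funext fun i => by simpa [negStr, Bool.eq_not_iff] using hb i)

theorem gyni_classical_strategy_wins_iff_general {N : ℕ} [NeZero N]
    (y : Fin N → Bool) (x : Fin N → Bool) :
    (∀ i : Fin N, xor (y (i + 1)) (xor (x i) (y i)) = x (i + 1)) ↔
      (x = y ∨ x = negStr y) := by
  rw [eq_or_eq_negStr_iff_exists_xor_const,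
    ← Fin.forall_apply_add_one_eq_iff_exists_const fun i => xor (x i) (y i)]
  exact forall_congr' fun i => Bool.xor_xor_eq_iff_xor_eq _ _ _ _

/-- The deterministic strategy where party `i` outputs `y (i+1) ⊕ x i ⊕ y i`
wins the GYNI game exactly when the input string `x` equals `y` or `ȳ`. -/
theorem gyni_classical_strategy_wins_iff {N : ℕ} [NeZero N] (hN : 2 ≤ N)
    (y : Fin N → Bool) (x : Fin N → Bool) :
    (∀ i : Fin N, xor (y (i + 1)) (xor (x i) (y i)) = x (i + 1)) ↔
      (x = y ∨ x = negStr y) :=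
  gyni_classical_strategy_wins_iff_general y x
end

section
/- For any prior distribution q on {0,1}^N, the maximal winning probability of the GYNI game over all deterministic local strategies is at least max over x of (q(x) + q(x̄)). -/
open scoped BigOperators

/-! Pick `x` maximising `q x + q x̄`. If party `i` answers `x (i + 1)` on seeing `x i` and its
negation otherwise, the strategy wins on both `x` and `x̄`, which are distinct strings since `N ≠ 0`. -/

section

variable {N : ℕ} [NeZero N]

theorem negStr_ne_self (x : Fin N → Bool) : negStr x ≠ x :=
  fun h => by simpa [negStr] using congrFun h 0

theorem sum_le_classWin_of_winsOn (q : (Fin N → Bool) → ℝ) (hq : ∀ x, 0 ≤ q x)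
    (f : Fin N → Bool → Bool) (S : Finset (Fin N → Bool)) (hS : ∀ x ∈ S, winsOn f x) :
    ∑ x ∈ S, q x ≤ classWin q f :=
  calc ∑ x ∈ S, q x = ∑ x ∈ S, q x * (if winsOn f x then (1 : ℝ) else 0) :=
        Finset.sum_congr rfl fun x hx => by simp [hS x hx]
    _ ≤ classWin q f :=
        Finset.sum_le_sum_of_subset_of_nonneg (Finset.subset_univ S) fun x _ _ =>
          mul_nonneg (hq x) (by split_ifs <;> norm_num)

def relayStrategy (x : Fin N → Bool) : Fin N → Bool → Bool :=
  fun i b => if b = x i then x (i + 1) else !x (i + 1)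

theorem winsOn_relayStrategy_self (x : Fin N → Bool) : winsOn (relayStrategy x) x := by
  simp [winsOn, relayStrategy]

theorem winsOn_relayStrategy_negStr (x : Fin N → Bool) :
    winsOn (relayStrategy x) (negStr x) := by
  simp [winsOn, relayStrategy, negStr]

end

theorem exists_omegaC_eq {N : ℕ} (q : (Fin N → Bool) → ℝ) :
    ∃ x, omegaC q = q x + q (negStr x) := by
  obtain ⟨x, -, hx⟩ := Finset.exists_mem_eq_sup' Finset.univ_nonempty
    (fun x => q x + q (negStr x))
  exact ⟨x, hx⟩

theorem gyni_classical_lower_bound_general {N : ℕ} [NeZero N]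
    (q : (Fin N → Bool) → ℝ) (hq : ∀ x, 0 ≤ q x) :
    ∃ f : Fin N → Bool → Bool, omegaC q ≤ classWin q f := by
  obtain ⟨x, hx⟩ := exists_omegaC_eq q
  refine ⟨relayStrategy x, ?_⟩
  have hwins : ∀ y ∈ ({x, negStr x} : Finset _), winsOn (relayStrategy x) y := by
    simp only [Finset.mem_insert, Finset.mem_singleton]
    rintro y (rfl | rfl)
    exacts [winsOn_relayStrategy_self y, winsOn_relayStrategy_negStr x]
  calc omegaC q = ∑ y ∈ {x, negStr x}, q y := by
        rw [hx, Finset.sum_pair (negStr_ne_self x).symm]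
    _ ≤ classWin q (relayStrategy x) := sum_le_classWin_of_winsOn q hq _ _ hwins

/-- There is a deterministic local strategy whose GYNI winning probability is at
least `ω_c = max_x (q x + q x̄)`. -/
theorem gyni_classical_lower_bound {N : ℕ} [NeZero N] (hN : 2 ≤ N)
    (q : (Fin N → Bool) → ℝ) (hq : ∀ x, 0 ≤ q x) (hsum : ∑ x, q x = 1) :
    ∃ f : Fin N → Bool → Bool, omegaC q ≤ classWin q f :=
  gyni_classical_lower_bound_general q hq
end

section
/- Let H be a (complex) Hilbert space and let {M_x : x ∈ {0,1}^N} be a family of bounded self-adjoint operators on H satisfying: (i) M_x² = M_x for all x, and (ii) M_x M_y = 0 whenever x ≠ y and x ≠ ȳ. Let q : {0,1}^N → ℝ≥0 and ω_c = max_x (q(x) + q(x̄)). Then ∑_x q(x) M_x ≤ ω_c · I as operators, i.e., for every unit vector ψ, ∑_x q(x) ⟨ψ, M_x ψ⟩ ≤ ω_c. -/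
open scoped BigOperators

/-!
Write `v x = M x ψ` and `u = ∑ x, q x • v x`. As `M x` is an orthogonal projection,
`t := ∑ x, q x ⟪ψ, M x ψ⟫ = ∑ x, q x ‖v x‖² = re ⟪ψ, u⟫ ≤ ‖ψ‖ ‖u‖`. The `v x` are pairwise
orthogonal except within the pairs `{x, x̄}`, so expanding `‖u‖²` and bounding the surviving
cross terms by AM-GM gives `‖u‖² ≤ ∑ x, (q x + q x̄) q x ‖v x‖² ≤ ω_c t`. Hence `t² ≤ ω_c t ‖ψ‖²`,
i.e. `t ≤ ω_c ‖ψ‖²`.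
-/

open RCLike Finset

section AlmostOrthogonal

variable {𝕜 E ι : Type*} [RCLike 𝕜] [NormedAddCommGroup E] [InnerProductSpace 𝕜 E] [Fintype ι]

local notation "⟪" x ", " y "⟫" => inner 𝕜 x y

theorem norm_sum_smul_sq_eq_sum_sum_re_inner (q : ι → ℝ) (v : ι → E) :
    ‖∑ i, (q i : 𝕜) • v i‖ ^ 2 = ∑ i, ∑ j, q i * q j * re ⟪v i, v j⟫ := by
  simp only [@norm_sq_eq_re_inner 𝕜, sum_inner, inner_sum, inner_smul_left, inner_smul_right,
    conj_ofReal, map_sum, re_ofReal_mul, mul_sum]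
  rw [sum_comm]
  exact Fintype.sum_congr _ _ fun i => Fintype.sum_congr _ _ fun j => by ring

theorem norm_sum_smul_sq_le_of_inner_eq_zero (S : ι → Finset ι) (hS : ∀ i j, j ∈ S i → i ∈ S j)
    (q : ι → ℝ) (hq : ∀ i, 0 ≤ q i) (v : ι → E) (hv : ∀ i j, j ∉ S i → ⟪v i, v j⟫ = 0) :
    ‖∑ i, (q i : 𝕜) • v i‖ ^ 2 ≤ ∑ i, (∑ j ∈ S i, q j) * q i * ‖v i‖ ^ 2 := by
  classical
  have hterm : ∀ i j, q i * q j * re ⟪v i, v j⟫ ≤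
      if j ∈ S i then q i * q j * ((‖v i‖ ^ 2 + ‖v j‖ ^ 2) / 2) else 0 := by
    intro i j
    split_ifs with hj
    · -- `re ⟪a, b⟫ ≤ ‖a‖ ‖b‖ ≤ (‖a‖² + ‖b‖²) / 2`
      refine mul_le_mul_of_nonneg_left ?_ (mul_nonneg (hq i) (hq j))
      nlinarith [re_inner_le_norm (𝕜 := 𝕜) (v i) (v j), sq_nonneg (‖v i‖ - ‖v j‖)]
    · simp [hv i j hj]
  have hswap : ∑ i, ∑ j, (if j ∈ S i then q i * q j * ‖v j‖ ^ 2 else 0) =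
      ∑ i, ∑ j, if j ∈ S i then q i * q j * ‖v i‖ ^ 2 else 0 := by
    rw [sum_comm]
    refine Fintype.sum_congr _ _ fun i => Fintype.sum_congr _ _ fun j => ?_
    rw [mul_comm (q j), if_congr ⟨hS j i, hS i j⟩ rfl rfl]
  calc ‖∑ i, (q i : 𝕜) • v i‖ ^ 2 = ∑ i, ∑ j, q i * q j * re ⟪v i, v j⟫ :=
        norm_sum_smul_sq_eq_sum_sum_re_inner q v
    _ ≤ ∑ i, ∑ j, if j ∈ S i then q i * q j * ((‖v i‖ ^ 2 + ‖v j‖ ^ 2) / 2) else 0 :=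
        sum_le_sum fun i _ => sum_le_sum fun j _ => hterm i j
    _ = ∑ i, ∑ j, if j ∈ S i then q i * q j * ‖v i‖ ^ 2 else 0 := by
        have hsplit : ∀ i j, (if j ∈ S i then q i * q j * ((‖v i‖ ^ 2 + ‖v j‖ ^ 2) / 2) else 0) =
            ((if j ∈ S i then q i * q j * ‖v i‖ ^ 2 else 0) +
              (if j ∈ S i then q i * q j * ‖v j‖ ^ 2 else 0)) / 2 := by
          intro i j
          split_ifs <;> ring
        simp only [hsplit, ← sum_div, sum_add_distrib, hswap]
        ring
    _ = ∑ i, (∑ j ∈ S i, q j) * q i * ‖v i‖ ^ 2 := by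
        simp only [sum_ite_mem, univ_inter, sum_mul]
        refine Fintype.sum_congr _ _ fun i => sum_congr rfl fun j _ => by ring

theorem norm_sum_smul_sq_le_of_inner_eq_zero_of_involutive {σ : ι → ι}
    (hσ : Function.Involutive σ) (q : ι → ℝ) (hq : ∀ i, 0 ≤ q i) {ω : ℝ}
    (hω : ∀ i, q i + q (σ i) ≤ ω) (v : ι → E)
    (hv : ∀ i j, i ≠ j → i ≠ σ j → ⟪v i, v j⟫ = 0) :
    ‖∑ i, (q i : 𝕜) • v i‖ ^ 2 ≤ ω * ∑ i, q i * ‖v i‖ ^ 2 := by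
  classical
  have hpair : ∀ i, ∑ j ∈ {i, σ i}, q j ≤ ω := by
    intro i
    by_cases hi : i = σ i
    · rw [← hi, pair_eq_singleton, sum_singleton]
      linarith [hq (σ i), hω i]
    · exact (sum_pair hi).trans_le (hω i)
  calc ‖∑ i, (q i : 𝕜) • v i‖ ^ 2 ≤ ∑ i, (∑ j ∈ {i, σ i}, q j) * q i * ‖v i‖ ^ 2 := by
        refine norm_sum_smul_sq_le_of_inner_eq_zero _ (fun i j hj => ?_) q hq v
          fun i j hj => ?_
        · rcases mem_insert.1 hj with rfl | hj
          · simp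
          · simp [mem_singleton.1 hj, hσ i]
        · simp only [mem_insert, mem_singleton, not_or] at hj
          exact hv i j (Ne.symm hj.1) fun h => hj.2 (by rw [h, hσ])
    _ ≤ ∑ i, ω * (q i * ‖v i‖ ^ 2) :=
        sum_le_sum fun i _ => by
          rw [mul_assoc]
          exact mul_le_mul_of_nonneg_right (hpair i) (mul_nonneg (hq i) (sq_nonneg _))
    _ = ω * ∑ i, q i * ‖v i‖ ^ 2 := (mul_sum ..).symm

theorem re_inner_le_of_norm_sq_le {ψ u : E} {ω : ℝ} (hω : 0 ≤ ω)
    (h : ‖u‖ ^ 2 ≤ ω * re ⟪ψ, u⟫) : re ⟪ψ, u⟫ ≤ ω * ‖ψ‖ ^ 2 := by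
  have hcs := re_inner_le_norm (𝕜 := 𝕜) ψ u
  rcases le_or_gt (re ⟪ψ, u⟫) 0 with ht | ht
  · exact ht.trans (by positivity)
  · nlinarith [norm_nonneg ψ, norm_nonneg u]

theorem LinearMap.IsSymmetricProjection.re_inner_apply_self {T : E →ₗ[𝕜] E}
    (hT : T.IsSymmetricProjection) (x : E) : re ⟪x, T x⟫ = ‖T x‖ ^ 2 := by
  calc re ⟪x, T x⟫ = re ⟪x, T (T x)⟫ := by rw [← Module.End.mul_apply, hT.isIdempotentElem.eq]
    _ = ‖T x‖ ^ 2 := by rw [← hT.isSymmetric, @norm_sq_eq_re_inner 𝕜]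

theorem sum_mul_re_inner_apply_le_of_isSymmetricProjection [Nonempty ι] {σ : ι → ι}
    (hσ : Function.Involutive σ) (T : ι → E →ₗ[𝕜] E) (hT : ∀ i, (T i).IsSymmetricProjection)
    (hTT : ∀ i j, i ≠ j → i ≠ σ j → T i * T j = 0) (q : ι → ℝ) (hq : ∀ i, 0 ≤ q i) {ω : ℝ}
    (hω : ∀ i, q i + q (σ i) ≤ ω) (ψ : E) :
    ∑ i, q i * re ⟪ψ, T i ψ⟫ ≤ ω * ‖ψ‖ ^ 2 := by
  obtain ⟨i₀⟩ := ‹Nonempty ι›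
  have hω₀ : 0 ≤ ω := (add_nonneg (hq i₀) (hq (σ i₀))).trans (hω i₀)
  have hsum : ∑ i, q i * re ⟪ψ, T i ψ⟫ = re ⟪ψ, ∑ i, (q i : 𝕜) • T i ψ⟫ := by
    simp only [inner_sum, inner_smul_right, map_sum, re_ofReal_mul]
  have horth : ∀ i j, i ≠ j → i ≠ σ j → ⟪T i ψ, T j ψ⟫ = 0 := fun i j hij hij' => by
    rw [(hT i).isSymmetric, ← Module.End.mul_apply, hTT i j hij hij', LinearMap.zero_apply,
      inner_zero_right]
  refine hsum ▸ re_inner_le_of_norm_sq_le hω₀ ?_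
  calc ‖∑ i, (q i : 𝕜) • T i ψ‖ ^ 2 ≤ ω * ∑ i, q i * ‖T i ψ‖ ^ 2 :=
        norm_sum_smul_sq_le_of_inner_eq_zero_of_involutive hσ q hq hω _ horth
    _ = ω * re ⟪ψ, ∑ i, (q i : 𝕜) • T i ψ⟫ := by
        simp only [← hsum, (hT _).re_inner_apply_self]

end AlmostOrthogonal

theorem negStr_involutive {N : ℕ} : Function.Involutive (negStr (N := N)) := fun x => by
  funext i
  simp [negStr]

open scoped ComplexInnerProductSpace in
/-- Quantum bound for GYNI: for self-adjoint projections `M x` with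
`M x * M y = 0` whenever `y ∉ {x, x̄}`, one has `∑_x q x M x ≤ ω_c · I`. -/
theorem gyni_quantum_bound {N : ℕ} {H : Type*} [NormedAddCommGroup H]
    [InnerProductSpace ℂ H] [CompleteSpace H]
    (M : (Fin N → Bool) → (H →L[ℂ] H))
    (hsa : ∀ x, IsSelfAdjoint (M x))
    (hproj : ∀ x, M x * M x = M x)
    (horth : ∀ x y, x ≠ y → x ≠ negStr y → M x * M y = 0)
    (q : (Fin N → Bool) → ℝ) (hq : ∀ x, 0 ≤ q x) :
    ∀ ψ : H, ‖ψ‖ = 1 → ∑ x, q x * (inner ℂ ψ ((M x) ψ) : ℂ).re ≤ omegaC q := by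
  intro ψ hψ
  have hbound := sum_mul_re_inner_apply_le_of_isSymmetricProjection negStr_involutive
    (fun x => (M x : H →ₗ[ℂ] H))
    (fun x => ContinuousLinearMap.IsStarProjection.isSymmetricProjection ⟨hproj x, hsa x⟩)
    (fun x y hxy hxy' => by rw [← ContinuousLinearMap.toLinearMap_mul, horth x y hxy hxy']; rfl)
    q hq (ω := omegaC q) (fun x => le_sup' (fun x => q x + q (negStr x)) (mem_univ x)) ψ
  simpa [hψ] using hbound
end

section
/- Any family of probability distributions P(a|x) (a, x ∈ {0,1}^N, N ≥ 2) satisfying the no-signalling conditions satisfies ∑_{x ∈ {0,1}^N} P(a_i = x_{i+1} for all i | x) ≤ 2. -/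
open scoped BigOperators

/-!
Write `G_S(x)` for the probability, on input `x`, that every party `i ∈ S` outputs `x (i + 1)`.
If `j ∉ S` and `κ = j + 1 ∉ S ∪ {j}`, no party of `S ∪ {j}` sees input `κ`, so by no-signalling
`G_{S ∪ {j}}` evaluated at `x` and at `x` with bit `κ` flipped are the probabilities of the two
complementary values of party `j`'s output under one and the same input `x`; they add up to
`G_S(x)`. Summing over `x` gives `∑ₓ G_{S ∪ {j}} = ½ ∑ₓ G_S`. A nonempty proper subset of the
cyclically ordered parties contains some `j` with `j + 1` outside it, so by induction
`∑ₓ G_S = 2 ^ (N - |S|)` for every proper subset `S`. The winning probability is at most `G_S`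
for any `S`; take `S` to be all parties but one.
-/

open Finset

namespace NSBox

variable {N : ℕ} (B : NSBox N)

noncomputable def marginal (S : Finset (Fin N)) (t x : Fin N → Bool) : ℝ :=
  ∑ a ∈ univ.filter (fun a => ∀ i ∈ S, a i = t i), B.P a x

theorem marginal_empty (t x : Fin N → Bool) : B.marginal ∅ t x = 1 := by
  simp [marginal, B.normalized]

theorem marginal_eq_of_eqOn {S : Finset (Fin N)} (t : Fin N → Bool) {x x' : Fin N → Bool}
    (h : ∀ i ∈ S, x i = x' i) : B.marginal S t x = B.marginal S t x' :=
  B.noSignalling S x x' h t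

theorem marginal_insert_add_marginal_insert_flip {S : Finset (Fin N)} {j : Fin N} (hj : j ∉ S)
    (t x : Fin N → Bool) :
    B.marginal (insert j S) t x + B.marginal (insert j S) (Function.update t j (!t j)) x =
      B.marginal S t x := by
  have hS : ∀ a : Fin N → Bool, (∀ i ∈ S, a i = Function.update t j (!t j) i) ↔
      ∀ i ∈ S, a i = t i := fun a =>
    forall₂_congr fun i hi => by rw [Function.update_of_ne (ne_of_mem_of_not_mem hi hj)]
  simp only [marginal, forall_mem_insert, Function.update_self, hS]
  conv_rhs => rw [← sum_filter_add_sum_filter_not _ (fun a => a j = t j), filter_filter,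
    filter_filter]
  congr 1 <;> refine sum_congr (filter_congr fun a _ => ?_) fun _ _ => rfl
  · tauto
  · rw [Bool.eq_not]
    tauto

end NSBox

def flipAt {N : ℕ} (κ : Fin N) (x : Fin N → Bool) : Fin N → Bool :=
  Function.update x κ (!x κ)

theorem flipAt_involutive {N : ℕ} (κ : Fin N) : Function.Involutive (flipAt κ) := by
  intro x
  ext i
  by_cases h : i = κ
  · subst h; simp [flipAt]
  · simp [flipAt, Function.update_of_ne h]

open Fin.CommRing in
theorem Fin.exists_mem_add_one_notMem {N : ℕ} [NeZero N] {S : Finset (Fin N)}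
    (hne : S.Nonempty) (huniv : S ≠ univ) : ∃ j ∈ S, j + 1 ∉ S := by
  by_contra! hclosed
  obtain ⟨j₀, hj₀⟩ := hne
  have hshift : ∀ k : ℕ, j₀ + (k : Fin N) ∈ S := by
    intro k
    induction k with
    | zero => simpa using hj₀
    | succ k ih => simpa [add_assoc] using hclosed _ ih
  refine huniv (eq_univ_of_forall fun i => ?_)
  simpa using hshift (i - j₀).val

namespace NSBox

variable {N : ℕ} [NeZero N] (B : NSBox N)

noncomputable def guessProb (S : Finset (Fin N)) (x : Fin N → Bool) : ℝ :=
  B.marginal S (fun i => x (i + 1)) x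

theorem P_le_guessProb (S : Finset (Fin N)) (x : Fin N → Bool) :
    B.P (fun i => x (i + 1)) x ≤ B.guessProb S x :=
  single_le_sum (f := fun a => B.P a x) (fun a _ => B.nonneg a x) (by simp)

theorem guessProb_insert_add_guessProb_insert_flipAt {S : Finset (Fin N)} {j : Fin N}
    (hj : j ∉ S) (hj₁ : j + 1 ∉ insert j S) (x : Fin N → Bool) :
    B.guessProb (insert j S) x + B.guessProb (insert j S) (flipAt (j + 1) x) =
      B.guessProb S x := by
  have hflip : (fun i => flipAt (j + 1) x (i + 1)) =
      Function.update (fun i => x (i + 1)) j (!x (j + 1)) :=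
    Function.update_comp_eq_of_injective x (add_left_injective 1) j _
  have hagree : ∀ i ∈ insert j S, flipAt (j + 1) x i = x i := fun i hi =>
    Function.update_of_ne (ne_of_mem_of_not_mem hi hj₁) _ x
  rw [guessProb, guessProb, hflip, B.marginal_eq_of_eqOn _ hagree]
  exact B.marginal_insert_add_marginal_insert_flip hj _ x

theorem sum_guessProb_insert {S : Finset (Fin N)} {j : Fin N} (hj : j ∉ S)
    (hj₁ : j + 1 ∉ insert j S) :
    2 * ∑ x, B.guessProb (insert j S) x = ∑ x, B.guessProb S x := by
  have hreindex : ∑ x, B.guessProb (insert j S) (flipAt (j + 1) x) =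
      ∑ x, B.guessProb (insert j S) x :=
    (flipAt_involutive (j + 1)).bijective.sum_comp _
  rw [two_mul]
  nth_rw 2 [← hreindex]
  rw [← sum_add_distrib]
  exact sum_congr rfl fun x _ => B.guessProb_insert_add_guessProb_insert_flipAt hj hj₁ x

theorem sum_guessProb {S : Finset (Fin N)} (hS : S ≠ univ) :
    ∑ x, B.guessProb S x = 2 ^ (N - #S) := by
  induction S using Finset.strongInduction with
  | H S ih =>
    rcases S.eq_empty_or_nonempty with rfl | hne
    · simp [guessProb, marginal_empty]
    obtain ⟨j, hj, hj₁⟩ := Fin.exists_mem_add_one_notMem hne hS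
    have hjS : j ∉ S.erase j := notMem_erase j S
    have hinsert : insert j (S.erase j) = S := insert_erase hj
    have hcard : #S < N := by simpa using card_lt_card (ssubset_univ_iff.mpr hS)
    have herase := ih (S.erase j) (erase_ssubset hj) fun h => hjS (h ▸ mem_univ j)
    rw [← hinsert] at hj₁
    have hhalve := B.sum_guessProb_insert hjS hj₁
    rw [hinsert, herase, card_erase_of_mem hj] at hhalve
    have hexp : N - (#S - 1) = N - #S + 1 := by
      have := hne.card_pos
      omega
    rw [hexp, pow_succ'] at hhalve
    exact mul_left_cancel₀ two_ne_zero hhalve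

end NSBox

theorem gyni_ns_sum_bound_general {N : ℕ} [NeZero N] (B : NSBox N) :
    ∑ x : Fin N → Bool, B.P (fun i => x (i + 1)) x ≤ 2 := by
  calc ∑ x : Fin N → Bool, B.P (fun i => x (i + 1)) x
      ≤ ∑ x, B.guessProb (univ.erase 0) x := sum_le_sum fun x _ => B.P_le_guessProb _ x
    _ = 2 := by
      rw [B.sum_guessProb fun h => notMem_erase 0 univ (h ▸ mem_univ 0),
        card_erase_of_mem (mem_univ 0), card_univ, Fintype.card_fin,
        Nat.sub_sub_self NeZero.one_le, pow_one]

/-- For any no-signalling box, the sum over all inputs of the probability of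
guessing every right neighbour's input is at most 2. -/
theorem gyni_ns_sum_bound {N : ℕ} [NeZero N] (hN : 2 ≤ N) (B : NSBox N) :
    ∑ x : Fin N → Bool, B.P (fun i => x (i + 1)) x ≤ 2 :=
  gyni_ns_sum_bound_general B
end

section
/- For the tripartite GYNI inequality with uniform weight 1/4 on the four input strings (0,0,0), (0,1,1), (1,0,1), (1,1,0), any no-signalling box P satisfies P(000|000) + P(110|011) + P(011|101) + P(101|110) ≤ 4/3, i.e., the winning probability ω = (1/4)[P(000|000)+P(110|011)+P(011|101)+P(101|110)] is at most 1/3. -/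
open scoped BigOperators

/- By no-signalling, `P(a|x)` is at most the probability, at any input `x'` agreeing with `x` on a
set `S` of parties, that the parties in `S` output `a` on `S`. Each of the inputs `001, 010, 100, 111`
differs from three of the four GYNI inputs in one party only, and the three corresponding events
at that input are pairwise disjoint, so any three of the four winning probabilities sum to at
most `1`. Adding the four such bounds gives `3 · (sum of all four) ≤ 4`. -/

namespace NSBox

variable {N : ℕ}

def cylinder (S : Finset (Fin N)) (a : Fin N → Bool) : Finset (Fin N → Bool) :=
  Finset.univ.filter fun a' => ∀ i ∈ S, a' i = a i

variable (B : NSBox N)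

theorem P_le_sum_cylinder {S : Finset (Fin N)} {a x x' : Fin N → Bool}
    (hx : ∀ i ∈ S, x i = x' i) : B.P a x ≤ ∑ a' ∈ cylinder S a, B.P a' x' := by
  calc B.P a x ≤ ∑ a' ∈ cylinder S a, B.P a' x :=
        Finset.single_le_sum (fun a' _ => B.nonneg a' x) (by simp [cylinder])
    _ = ∑ a' ∈ cylinder S a, B.P a' x' := B.noSignalling S x x' hx a

theorem sum_P_le_one_of_pairwiseDisjoint {ι : Type*} (t : Finset ι) (S : ι → Finset (Fin N))
    (a xs : ι → Fin N → Bool) (x : Fin N → Bool) (hx : ∀ k ∈ t, ∀ i ∈ S k, xs k i = x i)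
    (hd : (t : Set ι).PairwiseDisjoint fun k => cylinder (S k) (a k)) :
    ∑ k ∈ t, B.P (a k) (xs k) ≤ 1 := by
  calc ∑ k ∈ t, B.P (a k) (xs k)
      ≤ ∑ k ∈ t, ∑ a' ∈ cylinder (S k) (a k), B.P a' x :=
        Finset.sum_le_sum fun k hk => B.P_le_sum_cylinder (hx k hk)
    _ = ∑ a' ∈ t.biUnion fun k => cylinder (S k) (a k), B.P a' x := (Finset.sum_biUnion hd).symm
    _ ≤ ∑ a', B.P a' x := Finset.sum_le_univ_sum_of_nonneg fun a' => B.nonneg a' x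
    _ = 1 := B.normalized x

theorem add_add_le_one_of_disjoint {a₁ a₂ a₃ x₁ x₂ x₃ : Fin N → Bool} (x : Fin N → Bool)
    (S₁ S₂ S₃ : Finset (Fin N)) (hx₁ : ∀ i ∈ S₁, x₁ i = x i) (hx₂ : ∀ i ∈ S₂, x₂ i = x i)
    (hx₃ : ∀ i ∈ S₃, x₃ i = x i) (h₁₂ : Disjoint (cylinder S₁ a₁) (cylinder S₂ a₂))
    (h₁₃ : Disjoint (cylinder S₁ a₁) (cylinder S₃ a₃))
    (h₂₃ : Disjoint (cylinder S₂ a₂) (cylinder S₃ a₃)) :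
    B.P a₁ x₁ + B.P a₂ x₂ + B.P a₃ x₃ ≤ 1 := by
  have hd : ((Finset.univ : Finset (Fin 3)) : Set (Fin 3)).PairwiseDisjoint
      fun k => cylinder (![S₁, S₂, S₃] k) (![a₁, a₂, a₃] k) := by
    intro i _ j _ hij
    fin_cases i <;> fin_cases j <;> simp_all [Function.onFun, disjoint_comm]
  have h := B.sum_P_le_one_of_pairwiseDisjoint Finset.univ ![S₁, S₂, S₃] ![a₁, a₂, a₃]
    ![x₁, x₂, x₃] x (by simpa [Fin.forall_fin_succ] using ⟨hx₁, hx₂, hx₃⟩) hd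
  simpa [Fin.sum_univ_three, add_assoc] using h

end NSBox

/-- Tripartite GYNI inequality: any no-signalling box satisfies
`P(000|000)+P(110|011)+P(011|101)+P(101|110) ≤ 4/3`, i.e. the winning
probability with uniform weight `1/4` on the four inputs is at most `1/3`. -/
theorem gyni_tripartite_ns_bound (B : NSBox 3) :
    B.P ![false, false, false] ![false, false, false]
      + B.P ![true, true, false] ![false, true, true]
      + B.P ![false, true, true] ![true, false, true]
      + B.P ![true, false, true] ![true, true, false] ≤ 4 / 3 := by
  have h₀₀₁ : B.P ![false, false, false] ![false, false, false]
      + B.P ![true, true, false] ![false, true, true]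
      + B.P ![false, true, true] ![true, false, true] ≤ 1 :=
    B.add_add_le_one_of_disjoint ![false, false, true] {0, 1} {0, 2} {1, 2}
      (by decide) (by decide) (by decide) (by decide) (by decide) (by decide)
  have h₀₁₀ : B.P ![false, false, false] ![false, false, false]
      + B.P ![true, true, false] ![false, true, true]
      + B.P ![true, false, true] ![true, true, false] ≤ 1 :=
    B.add_add_le_one_of_disjoint ![false, true, false] {0, 2} {0, 1} {1, 2}
      (by decide) (by decide) (by decide) (by decide) (by decide) (by decide)
  have h₁₀₀ : B.P ![false, false, false] ![false, false, false]
      + B.P ![false, true, true] ![true, false, true]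
      + B.P ![true, false, true] ![true, true, false] ≤ 1 :=
    B.add_add_le_one_of_disjoint ![true, false, false] {1, 2} {0, 1} {0, 2}
      (by decide) (by decide) (by decide) (by decide) (by decide) (by decide)
  have h₁₁₁ : B.P ![true, true, false] ![false, true, true]
      + B.P ![false, true, true] ![true, false, true]
      + B.P ![true, false, true] ![true, true, false] ≤ 1 :=
    B.add_add_le_one_of_disjoint ![true, true, true] {1, 2} {0, 2} {0, 1}
      (by decide) (by decide) (by decide) (by decide) (by decide) (by decide)
  linarith
end
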